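/- arXiv:2305.17294 — 3 statements merged into one kernel-verified Lean document; each statement's English description precedes it below -/
import Mathlib

section
/- Let c : ℝ → ℝ² be a unit-speed plane curve (‖c'(s)‖ = 1 for all s) that is twice continuously differentiable in a neighborhood of a point s ∈ ℝ. Let n(s) := (c'(s)₂, −c'(s)₁) denote the unit normal (the tangent c'(s) rotated by −π/2), and let κ(s) := ⟨c''(s), (−c'(s)₂, c'(s)₁)⟩ denote the signed curvature. Then the Neumann–Poincaré kernel K(s,t) := ⟨c(s) − c(t), n(s)⟩ / (2π ‖c(s) − c(t)‖²), defined for t ≠ s sufficiently close to s, has a removable singularity at the diagonal: lim_{t → s, t ≠ s} K(s,t) = κ(s)/(4π). -/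
open Filter Real
open scoped RealInnerProductSpace Topology

theorem quad_limit {f f' : ℝ → ℝ} {s a : ℝ}
    (hff' : ∀ᶠ t in 𝓝 s, HasDerivAt f (f' t) t)
    (hf'' : HasDerivAt f' a s) (h0 : f s = 0) (h1 : f' s = 0) :
    Tendsto (fun t => f t / (t - s) ^ 2) (𝓝[≠] s) (𝓝 (a / 2)) := by
  have hgg' : ∀ᶠ t in (𝓝 s : Filter ℝ), HasDerivAt (fun t => (t - s) ^ 2) (2 * (t - s)) t := by
    filter_upwards with t
    simpa [mul_comm] using ((hasDerivAt_id t).sub_const s).fun_pow 2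
  have hg' : ∀ᶠ t in 𝓝[≠] s, 2 * (t - s) ≠ 0 := by
    filter_upwards [self_mem_nhdsWithin] with t ht
    have : t - s ≠ 0 := sub_ne_zero.mpr ht
    positivity
  have hfa : Tendsto f (𝓝[≠] s) (𝓝 0) := by
    have := (hff'.self_of_nhds).continuousAt.continuousWithinAt (s := {s}ᶜ)
    rwa [ContinuousWithinAt, h0] at this
  have hga : Tendsto (fun t : ℝ => (t - s) ^ 2) (𝓝[≠] s) (𝓝 0) := by
    have h : ContinuousAt (fun t : ℝ => (t - s) ^ 2) s := by fun_prop
    have := h.continuousWithinAt (s := {s}ᶜ)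
    rwa [ContinuousWithinAt, sub_self, zero_pow (by norm_num)] at this
  have hslope : Tendsto (slope f' s) (𝓝[≠] s) (𝓝 a) :=
    hasDerivAt_iff_tendsto_slope.mp hf''
  have hdiv : Tendsto (fun t => f' t / (2 * (t - s))) (𝓝[≠] s) (𝓝 (a / 2)) := by
    have h2 : Tendsto (fun t => slope f' s t / 2) (𝓝[≠] s) (𝓝 (a / 2)) :=
      hslope.div_const 2
    refine h2.congr' ?_
    filter_upwards [self_mem_nhdsWithin] with t ht
    rw [slope_def_field, h1]
    rw [sub_zero, div_div, mul_comm]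
  exact HasDerivAt.lhopital_zero_nhdsNE
    (hff'.filter_mono nhdsWithin_le_nhds) (hgg'.filter_mono nhdsWithin_le_nhds)
    hg' hfa hga hdiv

/-- The Neumann–Poincaré kernel of a unit-speed `C²` plane curve has a removable
singularity on the diagonal, with limiting value `κ(s) / (4π)`. -/
theorem neumann_poincare_kernel_removable_singularity
    (c : ℝ → EuclideanSpace ℝ (Fin 2)) (s : ℝ)
    (hC2 : ContDiffAt ℝ 2 c s)
    (hunit : ∀ t, ‖deriv c t‖ = 1) :
    Tendsto
      (fun t =>
        ⟪c s - c t, (WithLp.toLp 2 ![deriv c s 1, -(deriv c s 0)] : EuclideanSpace ℝ (Fin 2))⟫ /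
          (2 * π * ‖c s - c t‖ ^ 2))
      (𝓝[≠] s)
      (𝓝 (⟪deriv (deriv c) s,
            (WithLp.toLp 2 ![-(deriv c s 1), deriv c s 0] : EuclideanSpace ℝ (Fin 2))⟫ / (4 * π))) := by
  set d := deriv c with hd
  set d' := deriv d s with hd'
  set n : EuclideanSpace ℝ (Fin 2) := WithLp.toLp 2 ![d s 1, -(d s 0)] with hn
  set m : EuclideanSpace ℝ (Fin 2) := WithLp.toLp 2 ![-(d s 1), d s 0] with hm
  -- differentiability facts
  have hev : ∀ᶠ t in 𝓝 s, HasDerivAt c (d t) t := by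
    filter_upwards [hC2.eventually (by norm_num)] with t ht
    exact (ht.differentiableAt (by norm_num)).hasDerivAt
  have hds : HasDerivAt c (d s) s := hev.self_of_nhds
  have hdiffd : DifferentiableAt ℝ d s := by
    obtain ⟨u, hu, hcu⟩ := hC2.contDiffOn (m := 2) le_rfl (by norm_num)
    obtain ⟨v, hvu, hv, hsv⟩ := mem_nhds_iff.mp hu
    have := (hcu.mono hvu).deriv_of_isOpen hv (m := 1) le_rfl
    exact (this.differentiableOn one_ne_zero).differentiableAt (hv.mem_nhds hsv)
  have hdd : HasDerivAt d d' s := hdiffd.hasDerivAt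
  -- numerator
  set f : ℝ → ℝ := fun t => ⟪c t - c s, n⟫ with hf
  set f' : ℝ → ℝ := fun t => ⟪d t, n⟫ with hf'
  have hff' : ∀ᶠ t in 𝓝 s, HasDerivAt f (f' t) t := by
    filter_upwards [hev] with t ht
    have := HasDerivAt.inner ℝ (ht.sub_const (c s)) (hasDerivAt_const t n)
    simpa only [inner_zero_right, zero_add] using this
  have hf'' : HasDerivAt f' ⟪d', n⟫ s := by
    have := HasDerivAt.inner ℝ hdd (hasDerivAt_const s n)
    simpa only [inner_zero_right, zero_add] using this
  have hf0 : f s = 0 := by simp [hf]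
  have hf1 : f' s = 0 := by
    simp [hf', hn, PiLp.inner_apply, Fin.sum_univ_two]
    ring
  have hNum : Tendsto (fun t => f t / (t - s) ^ 2) (𝓝[≠] s) (𝓝 (⟪d', n⟫ / 2)) :=
    quad_limit hff' hf'' hf0 hf1
  -- denominator
  set g : ℝ → ℝ := fun t => ⟪c s - c t, c s - c t⟫ with hg
  set g' : ℝ → ℝ := fun t => -(2 * ⟪d t, c s - c t⟫) with hg'
  have hgg' : ∀ᶠ t in 𝓝 s, HasDerivAt g (g' t) t := by
    filter_upwards [hev] with t ht
    have h1 : HasDerivAt (fun t => c s - c t) (-(d t)) t := (ht.const_sub (c s))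
    have := HasDerivAt.inner ℝ h1 h1
    refine this.congr_deriv ?_
    simp only [hg', inner_neg_left, inner_neg_right]
    rw [real_inner_comm (c s - c t) (d t)]
    ring
  have hg'' : HasDerivAt g' 2 s := by
    have h1 : HasDerivAt (fun t => c s - c t) (-(d s)) s := (hds.const_sub (c s))
    have h2 := HasDerivAt.inner ℝ hdd h1
    have h3 := (h2.const_mul (2 : ℝ)).neg
    refine h3.congr_deriv ?_
    have : ⟪d s, d s⟫ = 1 := by
      rw [real_inner_self_eq_norm_sq, hunit s]
      norm_num
    simp [inner_neg_right, this, hunit s]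
  have hg0 : g s = 0 := by simp [hg]
  have hg1 : g' s = 0 := by simp [hg']
  have hDen : Tendsto (fun t => g t / (t - s) ^ 2) (𝓝[≠] s) (𝓝 1) := by
    have := quad_limit hgg' hg'' hg0 hg1
    norm_num at this
    exact this
  -- combine
  have htwo : Tendsto (fun t => (-(f t) / (t - s) ^ 2) / (2 * π * (g t / (t - s) ^ 2)))
      (𝓝[≠] s) (𝓝 ((-(⟪d', n⟫ / 2)) / (2 * π * 1))) := by
    have hne : (2 * π * 1 : ℝ) ≠ 0 := by simp [pi_ne_zero]
    have := hNum.neg.div (tendsto_const_nhds.mul hDen) hne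
    exact this.congr (fun t => by simp [Pi.div_apply, neg_div])
  have hval : (-(⟪d', n⟫ / 2)) / (2 * π * 1) = ⟪d', m⟫ / (4 * π) := by
    have hmn : ⟪d', m⟫ = -⟪d', n⟫ := by
      simp [hm, hn, PiLp.inner_apply, Fin.sum_univ_two]
      ring
    rw [hmn, mul_one, neg_div, neg_div, div_div, neg_inj]
    congr 1
    ring
  rw [hval] at htwo
  refine htwo.congr' ?_
  filter_upwards [self_mem_nhdsWithin] with t ht
  have hq : ((t : ℝ) - s) ^ 2 ≠ 0 := pow_ne_zero _ (sub_ne_zero.mpr ht)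
  have hnorm : ‖c s - c t‖ ^ 2 = g t := (real_inner_self_eq_norm_sq _).symm
  have hfneg : -(f t) = ⟪c s - c t, n⟫ := by
    rw [hf, ← neg_sub (c t) (c s), inner_neg_left]
  rw [mul_div_assoc', div_div_div_cancel_right₀ hq, hfneg, hnorm]
end

section
/- Let ℓ > 0 and let c : ℝ → ℝ² be an ℓ-periodic, twice continuously differentiable, unit-speed plane curve (‖c'(s)‖ = 1 for all s) that is injective on [0, ℓ). Let n(s) := (c'(s)₂, −c'(s)₁) and κ(s) := ⟨c''(s), (−c'(s)₂, c'(s)₁)⟩. Define K̃ : ℝ × ℝ → ℝ by K̃(s,t) := ⟨c(s) − c(t), n(s)⟩ / (2π ‖c(s) − c(t)‖²) when s − t is not an integer multiple of ℓ, and K̃(s,t) := κ(s)/(4π) when s − t is an integer multiple of ℓ. Then K̃ is continuous on ℝ × ℝ. -/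
open Real intervalIntegral
open scoped RealInnerProductSpace

namespace NeumannPoincareAux

variable {c : ℝ → EuclideanSpace ℝ (Fin 2)}

lemma ftc1 (hd1 : Differentiable ℝ c) (hc' : Continuous (deriv c)) (s d : ℝ) :
    c (s + d) - c s = d • ∫ u in (0:ℝ)..1, deriv c (s + u * d) := by
  have hinner : ∀ u : ℝ, HasDerivAt (fun u : ℝ => s + u * d) d u := fun u => by
    simpa using ((hasDerivAt_id u).mul_const d).const_add s
  have key : ∀ u ∈ Set.uIcc (0:ℝ) 1,
      HasDerivAt (fun u : ℝ => c (s + u * d)) (d • deriv c (s + u * d)) u := by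
    intro u _
    exact ((hd1 _).hasDerivAt).scomp u (hinner u)
  have hcont : Continuous fun u : ℝ => d • deriv c (s + u * d) :=
    (hc'.comp (by continuity)).const_smul d
  have := integral_eq_sub_of_hasDerivAt key (hcont.intervalIntegrable 0 1)
  rw [intervalIntegral.integral_smul] at this
  simpa using this.symm

lemma taylor2 (hd1 : Differentiable ℝ c) (hc' : Continuous (deriv c))
    (hd2 : Differentiable ℝ (deriv c)) (hc'' : Continuous (deriv (deriv c)))
    (s d : ℝ) :
    ⟪c s - c (s + d), (!₂[deriv c s 1, -(deriv c s 0)] : EuclideanSpace ℝ (Fin 2))⟫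
      = d ^ 2 * ∫ u in (0:ℝ)..1,
          (1 - u) * ⟪deriv (deriv c) (s + u * d),
            (!₂[-(deriv c s 1), deriv c s 0] : EuclideanSpace ℝ (Fin 2))⟫ := by
  set nv : EuclideanSpace ℝ (Fin 2) := !₂[deriv c s 1, -(deriv c s 0)] with hnv
  have hinner : ∀ u : ℝ, HasDerivAt (fun u : ℝ => s + u * d) d u := fun u => by
    simpa using ((hasDerivAt_id u).mul_const d).const_add s
  -- ψ and its derivative
  have hψ : ∀ u : ℝ, HasDerivAt (fun u : ℝ => ⟪c s - c (s + u * d), nv⟫)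
      (-(d * ⟪deriv c (s + u * d), nv⟫)) u := by
    intro u
    have h1 : HasDerivAt (fun u : ℝ => c s - c (s + u * d))
        (-(d • deriv c (s + u * d))) u := by
      simpa using (((hd1 _).hasDerivAt).scomp u (hinner u)).const_sub (c s)
    have := HasDerivAt.inner ℝ h1 (hasDerivAt_const u nv)
    simpa [inner_smul_left, mul_comm] using this
  have hψ' : ∀ u : ℝ, HasDerivAt (fun u : ℝ => -(d * ⟪deriv c (s + u * d), nv⟫))
      (-(d * (d * ⟪deriv (deriv c) (s + u * d), nv⟫))) u := by
    intro u
    have h1 : HasDerivAt (fun u : ℝ => deriv c (s + u * d))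
        (d • deriv (deriv c) (s + u * d)) u := ((hd2 _).hasDerivAt).scomp u (hinner u)
    have := HasDerivAt.inner ℝ h1 (hasDerivAt_const u nv)
    refine (this.const_mul d).neg.congr_deriv ?_
    simp [inner_smul_left, mul_comm, mul_left_comm]
  -- combined function χ
  have hχ : ∀ u ∈ Set.uIcc (0:ℝ) 1, HasDerivAt
      (fun u : ℝ => (1 - u) * (-(d * ⟪deriv c (s + u * d), nv⟫))
        + ⟪c s - c (s + u * d), nv⟫)
      ((1 - u) * (-(d * (d * ⟪deriv (deriv c) (s + u * d), nv⟫)))) u := by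
    intro u _
    have h0 : HasDerivAt (fun u : ℝ => (1 : ℝ) - u) (-1) u := by
      simpa using (hasDerivAt_id u).const_sub 1
    have := (h0.mul (hψ' u)).add (hψ u)
    refine this.congr_deriv ?_
    ring
  have hcont : Continuous fun u : ℝ =>
      (1 - u) * (-(d * (d * ⟪deriv (deriv c) (s + u * d), nv⟫))) := by
    have : Continuous fun u : ℝ => ⟪deriv (deriv c) (s + u * d), nv⟫ :=
      (continuous_inner.comp (((hc''.comp (by continuity)).prodMk continuous_const)))
    fun_prop
  have key := integral_eq_sub_of_hasDerivAt hχ (hcont.intervalIntegrable 0 1)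
  have horth : ⟪deriv c s, nv⟫ = 0 := by
    simp [hnv, PiLp.inner_apply, Fin.sum_univ_two]
    ring
  have hmn : ∀ x : EuclideanSpace ℝ (Fin 2),
      ⟪x, (!₂[-(deriv c s 1), deriv c s 0] : EuclideanSpace ℝ (Fin 2))⟫ = -⟪x, nv⟫ := by
    intro x
    simp [hnv, PiLp.inner_apply, Fin.sum_univ_two]
    ring
  simp only [mul_one, one_mul, sub_zero, zero_mul, mul_zero, sub_self, inner_zero_left,
    add_zero, zero_add, horth, sub_zero, neg_zero, zero_sub] at key
  rw [← key, ← intervalIntegral.integral_const_mul]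
  apply intervalIntegral.integral_congr
  intro u _
  simp only []
  rw [hmn]
  ring



noncomputable def npMvec (c : ℝ → EuclideanSpace ℝ (Fin 2)) (s : ℝ) :
    EuclideanSpace ℝ (Fin 2) := !₂[-(deriv c s 1), deriv c s 0]

noncomputable def npA (c : ℝ → EuclideanSpace ℝ (Fin 2)) (p : ℝ × ℝ) : ℝ :=
  ∫ u in (0:ℝ)..1, (1 - u) * ⟪deriv (deriv c) (p.1 + u * (p.2 - p.1)), npMvec c p.1⟫

noncomputable def npB (c : ℝ → EuclideanSpace ℝ (Fin 2)) (p : ℝ × ℝ) : ℝ :=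
  ‖∫ u in (0:ℝ)..1, deriv c (p.1 + u * (p.2 - p.1))‖ ^ 2


lemma npMvec_cont (hc' : Continuous (deriv c)) : Continuous (npMvec c) := by
  refine (PiLp.continuous_toLp (p := 2) (β := fun _ : Fin 2 => ℝ)).comp ?_
  apply continuous_pi
  intro i
  fin_cases i
  · exact ((continuous_apply (1 : Fin 2)).comp ((PiLp.continuous_ofLp (p := 2) (β := fun _ : Fin 2 => ℝ)).comp hc')).neg
  · exact ((continuous_apply (0 : Fin 2)).comp ((PiLp.continuous_ofLp (p := 2) (β := fun _ : Fin 2 => ℝ)).comp hc'))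

lemma npA_cont (hc' : Continuous (deriv c)) (hc'' : Continuous (deriv (deriv c))) :
    Continuous (npA c) := by
  apply continuous_parametric_intervalIntegral_of_continuous'
  apply Continuous.mul
  · fun_prop
  · apply Continuous.inner
    · apply hc''.comp
      fun_prop
    · exact (npMvec_cont hc').comp (continuous_fst.fst)

lemma npB_cont (hc' : Continuous (deriv c)) : Continuous (npB c) := by
  apply Continuous.pow
  apply Continuous.norm
  apply continuous_parametric_intervalIntegral_of_continuous'
  apply hc'.comp
  fun_prop

lemma npA_diag (s : ℝ) :
    npA c (s, s) = ⟪deriv (deriv c) s, npMvec c s⟫ / 2 := by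
  unfold npA
  simp only [sub_self, mul_zero, add_zero]
  rw [intervalIntegral.integral_mul_const]
  have : ∫ u in (0:ℝ)..1, (1 - u) = 1 / 2 := by
    rw [intervalIntegral.integral_sub intervalIntegrable_const
      (intervalIntegral.intervalIntegrable_id), integral_id, integral_const]
    norm_num
  rw [this]
  ring

lemma npB_diag (hunit : ∀ s, ‖deriv c s‖ = 1) (s : ℝ) : npB c (s, s) = 1 := by
  unfold npB
  simp only [sub_self, mul_zero, add_zero]
  rw [integral_const]
  simp [hunit s]



lemma np_ne (ℓ : ℝ) (hℓ : 0 < ℓ) (hper : ∀ s, c (s + ℓ) = c s)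
    (hinj : Set.InjOn c (Set.Ico 0 ℓ)) {s t : ℝ}
    (h : ¬ ∃ k : ℤ, s - t = k * ℓ) : c s ≠ c t := by
  have hperZ : ∀ (k : ℤ) (x : ℝ), c (x + k * ℓ) = c x := by
    intro k x
    have : Function.Periodic c ℓ := hper
    simpa [mul_comm] using (this.int_mul k) x
  have hmem : ∀ x : ℝ, x - ⌊x / ℓ⌋ * ℓ ∈ Set.Ico 0 ℓ := by
    intro x
    have h1 : x - ⌊x / ℓ⌋ * ℓ = ℓ * Int.fract (x / ℓ) := by
      rw [Int.fract]
      field_simp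
    constructor
    · rw [h1]; exact mul_nonneg hℓ.le (Int.fract_nonneg _)
    · rw [h1]
      calc ℓ * Int.fract (x / ℓ) < ℓ * 1 := by
            exact (mul_lt_mul_iff_right₀ hℓ).2 (Int.fract_lt_one _)
        _ = ℓ := mul_one ℓ
  intro hc
  have hs : c (s - ⌊s / ℓ⌋ * ℓ) = c s := by
    have := hperZ (-⌊s / ℓ⌋) s
    simpa [sub_eq_add_neg] using this
  have ht : c (t - ⌊t / ℓ⌋ * ℓ) = c t := by
    have := hperZ (-⌊t / ℓ⌋) t
    simpa [sub_eq_add_neg] using this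
  have heq := hinj (hmem s) (hmem t) (by rw [hs, ht, hc])
  apply h
  refine ⟨⌊s / ℓ⌋ - ⌊t / ℓ⌋, ?_⟩
  have : s - ⌊s / ℓ⌋ * ℓ = t - ⌊t / ℓ⌋ * ℓ := heq
  push_cast
  linarith

lemma np_closed (ℓ : ℝ) (hℓ : 0 < ℓ) :
    IsClosed {p : ℝ × ℝ | ∃ k : ℤ, p.1 - p.2 = k * ℓ} := by
  have : {p : ℝ × ℝ | ∃ k : ℤ, p.1 - p.2 = k * ℓ}
      = (fun p : ℝ × ℝ => (p.1 - p.2) / ℓ) ⁻¹' (Set.range (Int.cast : ℤ → ℝ)) := by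
    ext p
    simp only [Set.mem_setOf_eq, Set.mem_preimage, Set.mem_range]
    constructor
    · rintro ⟨k, hk⟩; exact ⟨k, by rw [hk]; field_simp⟩
    · rintro ⟨k, hk⟩; exact ⟨k, by field_simp at hk; linarith⟩
  rw [this]
  exact Int.isClosedEmbedding_coe_real.isClosed_range.preimage (by fun_prop)

end NeumannPoincareAux

open NeumannPoincareAux

open Classical in
/-- For a closed `C²` unit-speed plane curve, the Neumann–Poincaré kernel, extended
across the diagonal by `κ(s)/(4π)`, is continuous on `ℝ × ℝ`. -/
theorem neumann_poincare_kernel_continuous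
    (ℓ : ℝ) (hℓ : 0 < ℓ)
    (c : ℝ → EuclideanSpace ℝ (Fin 2))
    (hper : ∀ s, c (s + ℓ) = c s)
    (hC2 : ContDiff ℝ 2 c)
    (hunit : ∀ s, ‖deriv c s‖ = 1)
    (hinj : Set.InjOn c (Set.Ico 0 ℓ)) :
    Continuous (fun p : ℝ × ℝ =>
      if ∃ k : ℤ, p.1 - p.2 = k * ℓ then
        ⟪deriv (deriv c) p.1,
          (!₂[-(deriv c p.1 1), deriv c p.1 0] : EuclideanSpace ℝ (Fin 2))⟫ / (4 * π)
      else
        ⟪c p.1 - c p.2,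
          (!₂[deriv c p.1 1, -(deriv c p.1 0)] : EuclideanSpace ℝ (Fin 2))⟫ /
          (2 * π * ‖c p.1 - c p.2‖ ^ 2)) := by
  have h2 : (2 : WithTop ℕ∞) = 1 + 1 := by norm_num
  rw [h2, contDiff_succ_iff_deriv] at hC2
  obtain ⟨hd1, -, hcd⟩ := hC2
  rw [contDiff_one_iff_deriv] at hcd
  obtain ⟨hd2, hc''⟩ := hcd
  have hc' : Continuous (deriv c) := hd2.continuous
  have hperZ : ∀ (k : ℤ) (x : ℝ), c (x + k * ℓ) = c x := by
    intro k x
    have : Function.Periodic c ℓ := hper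
    simpa [mul_comm] using (this.int_mul k) x
  have hnvcont : Continuous (fun s : ℝ =>
      (!₂[deriv c s 1, -(deriv c s 0)] : EuclideanSpace ℝ (Fin 2))) := by
    refine (PiLp.continuous_toLp (p := 2) (β := fun _ : Fin 2 => ℝ)).comp ?_
    apply continuous_pi
    intro i
    fin_cases i
    · exact ((continuous_apply (1 : Fin 2)).comp ((PiLp.continuous_ofLp (p := 2) (β := fun _ : Fin 2 => ℝ)).comp hc'))
    · exact ((continuous_apply (0 : Fin 2)).comp ((PiLp.continuous_ofLp (p := 2) (β := fun _ : Fin 2 => ℝ)).comp hc')).neg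
  rw [continuous_iff_continuousAt]
  intro p₀
  by_cases hp : ∃ k : ℤ, p₀.1 - p₀.2 = k * ℓ
  · -- near the singular set
    obtain ⟨k, hk⟩ := hp
    have hp21 : p₀.2 + k * ℓ = p₀.1 := by linarith
    have hBc : Continuous (fun p : ℝ × ℝ => npB c (p.1, p.2 + k * ℓ)) :=
      (npB_cont hc').comp (by fun_prop)
    have hAc : Continuous (fun p : ℝ × ℝ => npA c (p.1, p.2 + k * ℓ)) :=
      (npA_cont hc' hc'').comp (by fun_prop)
    have hB0 : npB c (p₀.1, p₀.2 + k * ℓ) = 1 := by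
      rw [hp21]; exact npB_diag hunit p₀.1
    have hF : ContinuousAt (fun p : ℝ × ℝ =>
        npA c (p.1, p.2 + k * ℓ) / (2 * π * npB c (p.1, p.2 + k * ℓ))) p₀ := by
      apply ContinuousAt.div hAc.continuousAt
      · exact continuousAt_const.mul hBc.continuousAt
      · rw [hB0]
        simp [Real.pi_ne_zero]
    have hU : {p : ℝ × ℝ | |p.2 + k * ℓ - p.1| < ℓ ∧ 0 < npB c (p.1, p.2 + k * ℓ)}
        ∈ nhds p₀ := by
      apply IsOpen.mem_nhds
      · exact IsOpen.and (isOpen_lt (by fun_prop) continuous_const)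
          (isOpen_lt continuous_const hBc)
      · constructor
        · rw [hp21]; simpa using hℓ
        · rw [hB0]; norm_num
    apply hF.congr
    apply Filter.eventuallyEq_of_mem hU
    rintro p ⟨h1, h2⟩
    simp only
    set d : ℝ := p.2 + k * ℓ - p.1 with hd
    by_cases hm : ∃ m : ℤ, p.1 - p.2 = m * ℓ
    · obtain ⟨m, hmm⟩ := hm
      have hdm : d = (k - m) * ℓ := by push_cast; rw [hd]; linarith
      have hkm : k = m := by
        by_contra hne
        have h1' : (1:ℝ) * ℓ ≤ |(k - m : ℝ)| * ℓ := by
          apply mul_le_mul_of_nonneg_right _ hℓ.le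
          have : (1:ℤ) ≤ |k - m| := Int.one_le_abs (sub_ne_zero.mpr hne)
          calc (1:ℝ) ≤ |(k - m : ℤ)| := by exact_mod_cast this
            _ = |(k : ℝ) - m| := by push_cast [Int.cast_abs]; ring_nf
        rw [hdm, abs_mul, abs_of_pos hℓ] at h1
        linarith
      have hd0 : d = 0 := by rw [hdm, hkm]; ring
      have hp1 : p.2 + k * ℓ = p.1 := by linarith [hd ▸ hd0]
      rw [if_pos ⟨k, by linarith⟩, hp1, npA_diag, npB_diag hunit]
      have : (⟪deriv (deriv c) p.1, npMvec c p.1⟫ : ℝ)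
          = ⟪deriv (deriv c) p.1,
              (!₂[-(deriv c p.1 1), deriv c p.1 0] : EuclideanSpace ℝ (Fin 2))⟫ := rfl
      rw [this]
      rw [mul_one, div_div]
      congr 1
      ring
    · rw [if_neg hm]
      have hd0 : d ≠ 0 := by
        intro h0
        exact hm ⟨k, by rw [hd] at h0; linarith⟩
      have hct : c p.2 = c (p.1 + d) := by
        rw [show p.1 + d = p.2 + k * ℓ by rw [hd]; ring, hperZ k p.2]
      have hnum : ⟪c p.1 - c p.2,
            (!₂[deriv c p.1 1, -(deriv c p.1 0)] : EuclideanSpace ℝ (Fin 2))⟫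
          = d ^ 2 * npA c (p.1, p.2 + k * ℓ) := by
        rw [hct, taylor2 hd1 hc' hd2 hc'' p.1 d]
        congr 1
      have hden : ‖c p.1 - c p.2‖ ^ 2 = d ^ 2 * npB c (p.1, p.2 + k * ℓ) := by
        rw [hct, norm_sub_rev]
        rw [ftc1 hd1 hc' p.1 d, norm_smul, Real.norm_eq_abs, mul_pow, sq_abs]
        rfl
      rw [hnum, hden]
      rw [show 2 * π * (d ^ 2 * npB c (p.1, p.2 + k * ℓ))
          = d ^ 2 * (2 * π * npB c (p.1, p.2 + k * ℓ)) by ring]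
      exact (mul_div_mul_left _ _ (pow_ne_zero 2 hd0)).symm
  · -- away from the singular set
    have hg : ContinuousAt (fun p : ℝ × ℝ =>
        ⟪c p.1 - c p.2,
          (!₂[deriv c p.1 1, -(deriv c p.1 0)] : EuclideanSpace ℝ (Fin 2))⟫ /
          (2 * π * ‖c p.1 - c p.2‖ ^ 2)) p₀ := by
      apply ContinuousAt.div
      · apply Continuous.continuousAt
        exact Continuous.inner
          ((hd1.continuous.comp continuous_fst).sub (hd1.continuous.comp continuous_snd))
          (hnvcont.comp continuous_fst)
      · exact ContinuousAt.mul continuousAt_const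
          (((((hd1.continuous.comp continuous_fst).sub
            (hd1.continuous.comp continuous_snd)).norm.pow 2)).continuousAt)
      · have hne' : c p₀.1 - c p₀.2 ≠ 0 :=
          sub_ne_zero_of_ne (np_ne ℓ hℓ hper hinj hp)
        have h0 : (0:ℝ) < ‖c p₀.1 - c p₀.2‖ ^ 2 := pow_pos (norm_pos_iff.mpr hne') 2
        nlinarith [Real.pi_pos]
    apply hg.congr
    apply Filter.eventuallyEq_of_mem ((np_closed ℓ hℓ).isOpen_compl.mem_nhds hp)
    intro p hp'
    have hp'' : ¬ ∃ k : ℤ, p.1 - p.2 = k * ℓ := hp'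
    simp only
    rw [if_neg hp'']
end

section
/- Let c : ℝ → ℝ² be 1-periodic, continuously differentiable, injective on [0,1), with c'(t) ≠ 0 for all t. Then for every s ∈ ℝ, the function t ↦ log ‖c(s) − c(t)‖ is (absolutely) integrable on [0,1]. In particular, for any continuous 1-periodic density γ : ℝ → ℝ, the single layer potential integrand t ↦ log ‖c(s) − c(t)‖ · γ(t) is integrable on [0,1], so the single layer potential is defined also at points of the curve itself. -/
open Real MeasureTheory

open Set

section SingleLayerAux

lemma sl_intInt_log01 : IntervalIntegrable Real.log volume 0 1 := by
  rw [intervalIntegrable_iff_integrableOn_Ioc_of_le zero_le_one]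
  have h : IntegrableOn (fun x : ℝ => -Real.log x) (Ioc 0 1) volume := by
    apply intervalIntegral.integrableOn_deriv_of_nonneg (g := fun x : ℝ => x - x * Real.log x)
    · exact (continuous_id.sub Real.continuous_mul_log).continuousOn
    · intro x hx
      have h1 := (hasDerivAt_id x).sub (Real.hasDerivAt_mul_log hx.1.ne')
      exact h1.congr_deriv (by ring)
    · intro x hx
      simpa using Real.log_nonpos hx.1.le hx.2.le
  have h2 := h.neg
  rw [show (-(fun x : ℝ => -Real.log x)) = fun x : ℝ => Real.log x from by funext x; simp] at h2
  exact h2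

lemma sl_intInt_log_sub (s : ℝ) :
    IntervalIntegrable (fun t => Real.log (t - s)) volume (s - 1) (s + 1) := by
  have h1 : IntervalIntegrable (fun t => Real.log (t - s)) volume (s - 1) s := by
    have h := (sl_intInt_log01.comp_sub_left s).symm
    have he : (fun x => Real.log (s - x)) = fun t => Real.log (t - s) := by
      funext x; rw [show s - x = -(x - s) by ring, Real.log_neg_eq_log]
    rw [he] at h
    simpa using h
  have h2 : IntervalIntegrable (fun t => Real.log (t - s)) volume s (s + 1) := by
    have h := sl_intInt_log01.comp_sub_right s
    rw [show (0:ℝ) + s = s by ring, show (1:ℝ) + s = s + 1 by ring] at h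
    exact h
  exact h1.trans h2

lemma sl_periodic_transfer {f : ℝ → ℝ} (hf : Function.Periodic f 1) {a : ℝ}
    (h : IntervalIntegrable f volume a (a + 1)) : IntervalIntegrable f volume 0 1 := by
  have h2 : ∀ n : ℤ, IntervalIntegrable f volume (a + n) (a + n + 1) := by
    intro n
    have h3 := h.comp_sub_right (n : ℝ)
    have he : (fun x => f (x - (n : ℝ))) = f := by
      funext x
      simpa using hf.sub_int_mul_eq (x := x) n
    rw [he, show a + 1 + (n:ℝ) = a + n + 1 by ring] at h3
    exact h3
  have k1 := h2 (-⌈a⌉)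
  have k2 : IntervalIntegrable f volume (a + ((-⌈a⌉ : ℤ) : ℝ) + 1) (a + ((-⌈a⌉ : ℤ) : ℝ) + 2) := by
    have h4 := h2 (-⌈a⌉ + 1)
    have e1 : a + ((-⌈a⌉ + 1 : ℤ) : ℝ) = a + ((-⌈a⌉ : ℤ) : ℝ) + 1 := by push_cast; ring
    rw [e1] at h4
    rwa [show a + ((-⌈a⌉ : ℤ) : ℝ) + 1 + 1 = a + ((-⌈a⌉ : ℤ) : ℝ) + 2 by ring] at h4
  have key := k1.trans k2
  apply key.mono_set
  have h0 : a + ((-⌈a⌉ : ℤ) : ℝ) ≤ 0 := by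
    push_cast; linarith [Int.le_ceil a]
  have h1 : (1 : ℝ) ≤ a + ((-⌈a⌉ : ℤ) : ℝ) + 2 := by
    push_cast; linarith [(Int.ceil_lt_add_one a).le]
  rw [Set.uIcc_of_le (zero_le_one), Set.uIcc_of_le (by linarith)]
  exact Set.Icc_subset_Icc h0 (by linarith)

lemma sl_local_lower {c : ℝ → EuclideanSpace ℝ (Fin 2)} (hc : ContDiff ℝ 1 c) (s : ℝ)
    (hd : deriv c s ≠ 0) :
    ∃ δ > 0, ∃ m > 0, ∀ t, |t - s| ≤ δ → m * |t - s| ≤ ‖c s - c t‖ := by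
  set d : EuclideanSpace ℝ (Fin 2) := deriv c s with hdd
  have hdn : (0:ℝ) < ‖d‖ := norm_pos_iff.mpr hd
  set v : EuclideanSpace ℝ (Fin 2) := ‖d‖⁻¹ • d with hvd
  have hv : ‖v‖ = 1 := by
    rw [hvd, norm_smul, norm_inv, norm_norm, inv_mul_cancel₀ hdn.ne']
  set φ : ℝ → ℝ := fun u => (inner ℝ v (c u) : ℝ) with hφ
  have hcd : Continuous (deriv c) := hc.continuous_deriv le_rfl
  have hφd : ∀ u : ℝ, HasDerivAt φ ((inner ℝ v (deriv c u) : ℝ)) u := by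
    intro u
    have h1 : HasDerivAt c (deriv c u) u := (hc.differentiable one_ne_zero u).hasDerivAt
    exact ((innerSL ℝ v).hasFDerivAt.comp_hasDerivAt u h1 : )
  set m : ℝ := ‖d‖ / 2 with hm
  have hmpos : 0 < m := by positivity
  have hφs : (inner ℝ v d : ℝ) = ‖d‖ := by
    rw [hvd, real_inner_smul_left, real_inner_self_eq_norm_mul_norm]
    field_simp
  have hev : ∀ᶠ u in nhds s, m < (inner ℝ v (deriv c u) : ℝ) := by
    have hco : Continuous fun u => (inner ℝ v (deriv c u) : ℝ) := continuous_const.inner hcd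
    have hlt : m < (inner ℝ v (deriv c s) : ℝ) := by
      rw [← hdd, hφs, hm]; linarith
    exact (hco.tendsto s).eventually (eventually_gt_nhds hlt)
  obtain ⟨δ, hδpos, hball⟩ := Metric.eventually_nhds_iff.mp hev
  refine ⟨δ / 2, by positivity, m, hmpos, ?_⟩
  intro t ht
  have hmono : MonotoneOn (fun u => φ u - m * u) (Icc (s - δ/2) (s + δ/2)) := by
    apply monotoneOn_of_deriv_nonneg (convex_Icc _ _)
    · exact ((continuous_const.inner hc.continuous).sub
        (continuous_const.mul continuous_id)).continuousOn
    · intro u _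
      exact ((hφd u).sub ((hasDerivAt_id u).const_mul m)).differentiableAt.differentiableWithinAt
    · intro u hu
      have hder : deriv (fun u => φ u - m * u) u = (inner ℝ v (deriv c u) : ℝ) - m := by
        have := ((hφd u).sub ((hasDerivAt_id u).const_mul m))
        exact this.deriv.trans (by simp)
      rw [hder]
      have hu' : dist u s < δ := by
        rw [Real.dist_eq]
        rw [interior_Icc] at hu
        have := hu.1; have := hu.2
        rw [abs_lt]; constructor <;> linarith
      linarith [hball hu']
  have hCS : ∀ a b : ℝ, |φ a - φ b| ≤ ‖c a - c b‖ := by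
    intro a b
    have h1 : φ a - φ b = (inner ℝ v (c a - c b) : ℝ) := by rw [hφ]; simp [inner_sub_right]
    rw [h1]
    calc |(inner ℝ v (c a - c b) : ℝ)| ≤ ‖v‖ * ‖c a - c b‖ := abs_real_inner_le_norm _ _
      _ = ‖c a - c b‖ := by rw [hv, one_mul]
  have habs := abs_le.mp ht
  have hsm : s ∈ Icc (s - δ/2) (s + δ/2) := by constructor <;> linarith
  have htm : t ∈ Icc (s - δ/2) (s + δ/2) := by constructor <;> linarith
  rcases le_total s t with hst | hts
  · have h1 : φ s - m * s ≤ φ t - m * t := hmono hsm htm hst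
    have h2 : m * (t - s) ≤ φ t - φ s := by linarith
    have h3 : φ t - φ s ≤ |φ s - φ t| := by
      rw [abs_sub_comm]; exact le_abs_self _
    rw [abs_of_nonneg (by linarith : (0:ℝ) ≤ t - s)]
    linarith [hCS s t]
  · have h1 : φ t - m * t ≤ φ s - m * s := hmono htm hsm hts
    have h2 : m * (s - t) ≤ φ s - φ t := by linarith
    have h3 : φ s - φ t ≤ |φ s - φ t| := le_abs_self _
    rw [abs_of_nonpos (by linarith : t - s ≤ 0), show -(t - s) = s - t by ring]
    linarith [hCS s t]

end SingleLayerAux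

/-- For a regular closed `C¹` plane curve, the weakly singular kernel
`t ↦ log ‖c s − c t‖` is integrable on `[0,1]`; in particular so is the single layer
potential integrand `t ↦ log ‖c s − c t‖ · γ t` for any continuous periodic density. -/
theorem single_layer_kernel_integrable
    (c : ℝ → EuclideanSpace ℝ (Fin 2))
    (hc : ContDiff ℝ 1 c)
    (hcper : ∀ t, c (t + 1) = c t)
    (hreg : ∀ t, deriv c t ≠ 0)
    (hinj : Set.InjOn c (Set.Ico (0 : ℝ) 1)) :
    (∀ s : ℝ, IntegrableOn (fun t => Real.log ‖c s - c t‖) (Set.Icc (0 : ℝ) 1) volume) ∧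
    ∀ γ : ℝ → ℝ, Continuous γ → (∀ t, γ (t + 1) = γ t) →
      ∀ s : ℝ,
        IntegrableOn (fun t => Real.log ‖c s - c t‖ * γ t) (Set.Icc (0 : ℝ) 1) volume := by
  have hper : Function.Periodic c 1 := hcper
  have hcfract : ∀ u : ℝ, c u = c (Int.fract u) := by
    intro u
    have h := hper.sub_int_mul_eq (x := u) ⌊u⌋
    rw [mul_one] at h
    rw [Int.self_sub_floor] at h
    exact h.symm
  have hint : ∀ a b : ℝ, c a = c b → ∃ n : ℤ, a - b = (n : ℝ) := by
    intro a b hab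
    have ha : Int.fract a ∈ Ico (0:ℝ) 1 := ⟨Int.fract_nonneg a, Int.fract_lt_one a⟩
    have hb : Int.fract b ∈ Ico (0:ℝ) 1 := ⟨Int.fract_nonneg b, Int.fract_lt_one b⟩
    have hcc : c (Int.fract a) = c (Int.fract b) :=
      (hcfract a).symm.trans (hab.trans (hcfract b))
    have he := hinj ha hb hcc
    refine ⟨⌊a⌋ - ⌊b⌋, ?_⟩
    have ha' : Int.fract a = a - ⌊a⌋ := rfl
    have hb' : Int.fract b = b - ⌊b⌋ := rfl
    rw [ha', hb'] at he
    push_cast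
    linarith
  obtain ⟨R, hR⟩ := (isCompact_Icc (a := (0:ℝ)) (b := 1)).exists_bound_of_continuousOn
    hc.continuous.continuousOn
  have hRall : ∀ u : ℝ, ‖c u‖ ≤ R := by
    intro u
    rw [hcfract u]
    exact hR _ ⟨Int.fract_nonneg u, (Int.fract_lt_one u).le⟩
  have hR0 : 0 ≤ R := le_trans (norm_nonneg _) (hRall 0)
  set B : ℝ := 2 * R + 1 with hBdef
  have hB1 : (1:ℝ) ≤ B := by simp [hBdef]; linarith
  have hBall : ∀ t u : ℝ, ‖c t - c u‖ ≤ B := by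
    intro t u
    calc ‖c t - c u‖ ≤ ‖c t‖ + ‖c u‖ := norm_sub_le _ _
      _ ≤ B := by have := hRall t; have := hRall u; simp [hBdef]; linarith
  have key : ∀ s : ℝ, IntegrableOn (fun t => Real.log ‖c s - c t‖) (Set.Icc (0:ℝ) 1) volume := by
    intro s
    set f : ℝ → ℝ := fun t => Real.log ‖c s - c t‖ with hf
    have hfper : Function.Periodic f 1 := by
      intro t; simp only [hf, hcper t]
    have hcontnorm : Continuous fun t => ‖c s - c t‖ := (continuous_const.sub hc.continuous).norm
    obtain ⟨δ, hδpos, m, hmpos, hlow⟩ := sl_local_lower hc s (hreg s)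
    set δ' : ℝ := min δ 2⁻¹ with hδ'def
    have hδ'pos : 0 < δ' := lt_min hδpos (by norm_num)
    have hδ'le : δ' ≤ δ := min_le_left _ _
    have hδ'half : δ' ≤ 2⁻¹ := min_le_right _ _
    set K : Set ℝ := Icc (s - 2⁻¹) (s + 2⁻¹) ∩ {t | δ' ≤ |t - s|} with hKdef
    have hKc : IsCompact K := isCompact_Icc.inter_right
      (isClosed_le continuous_const ((continuous_id.sub continuous_const).abs))
    have hKne : (s + 2⁻¹) ∈ K := by
      have h2r : (0:ℝ) ≤ 2⁻¹ := by norm_num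
      constructor
      · exact ⟨by linarith, le_refl _⟩
      · simp only [Set.mem_setOf_eq]
        rw [show s + 2⁻¹ - s = (2⁻¹ : ℝ) by ring, abs_of_nonneg (by norm_num : (0:ℝ) ≤ 2⁻¹)]
        exact hδ'half
    obtain ⟨t₀, ht₀K, ht₀min⟩ := hKc.exists_isMinOn ⟨_, hKne⟩ hcontnorm.continuousOn
    have ht₀min' : ∀ t ∈ K, ‖c s - c t₀‖ ≤ ‖c s - c t‖ := fun t ht => ht₀min ht
    set ε : ℝ := ‖c s - c t₀‖ with hεdef
    have hεpos : 0 < ε := by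
      rw [hεdef, norm_pos_iff, sub_ne_zero]
      intro hEq
      obtain ⟨n, hn⟩ := hint s t₀ hEq
      have h1 : δ' ≤ |t₀ - s| := ht₀K.2
      have h2 : |t₀ - s| ≤ 2⁻¹ := by
        have := ht₀K.1.1; have := ht₀K.1.2
        rw [abs_le]; constructor <;> linarith
      have hn0 : n ≠ 0 := by
        intro h0
        rw [h0] at hn
        simp at hn
        rw [show t₀ - s = -(s - t₀) by ring, hn] at h1
        simp at h1
        linarith
      have : (1:ℝ) ≤ |(n:ℝ)| := by
        exact_mod_cast Int.one_le_abs hn0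
      rw [← hn, abs_sub_comm] at this
      linarith
    set m₀ : ℝ := min m (2 * ε) with hm₀def
    have hm₀pos : 0 < m₀ := lt_min hmpos (by positivity)
    have hlow2 : ∀ t ∈ Icc (s - 2⁻¹) (s + 2⁻¹), m₀ * |t - s| ≤ ‖c s - c t‖ := by
      intro t htI
      have htabs : |t - s| ≤ 2⁻¹ := by
        have := htI.1; have := htI.2
        rw [abs_le]; constructor <;> linarith
      rcases le_or_gt |t - s| δ' with hcase | hcase
      · have h1 := hlow t (hcase.trans hδ'le)
        have h2 : m₀ * |t - s| ≤ m * |t - s| :=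
          mul_le_mul_of_nonneg_right (min_le_left _ _) (abs_nonneg _)
        linarith
      · have htK : t ∈ K := ⟨htI, hcase.le⟩
        have h1 : ε ≤ ‖c s - c t‖ := ht₀min' t htK
        have h2 : m₀ * |t - s| ≤ (2 * ε) * 2⁻¹ :=
          mul_le_mul (min_le_right _ _) htabs (abs_nonneg _) (by positivity)
        have h3 : (2 * ε) * 2⁻¹ = ε := by ring
        linarith
    have hmeas : AEStronglyMeasurable f (volume.restrict (Icc (s - 2⁻¹) (s + 2⁻¹))) :=
      (Real.measurable_log.comp hcontnorm.measurable).aestronglyMeasurable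
    set G : ℝ → ℝ := fun t => |Real.log m₀| + Real.log B + |Real.log (t - s)| with hGdef
    have hGint : IntegrableOn G (Icc (s - 2⁻¹) (s + 2⁻¹)) volume := by
      have hconst : IntegrableOn (fun _ : ℝ => |Real.log m₀| + Real.log B)
          (Icc (s - 2⁻¹) (s + 2⁻¹)) volume := integrableOn_const
        (measure_Icc_lt_top.ne)
      have hlogpart : IntegrableOn (fun t => |Real.log (t - s)|)
          (Icc (s - 2⁻¹) (s + 2⁻¹)) volume := by
        have h1 := (sl_intInt_log_sub s).mono_set
          (by
            apply Set.uIcc_subset_uIcc <;> rw [Set.mem_uIcc] <;>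
              [left; left] <;> constructor <;> linarith :
            Set.uIcc (s - 2⁻¹) (s + 2⁻¹) ⊆ Set.uIcc (s - 1) (s + 1))
        have h2 := h1.abs
        rwa [intervalIntegrable_iff_integrableOn_Icc_of_le (by linarith)] at h2
      have := hconst.add hlogpart
      exact this
    have hbound : ∀ᵐ t ∂(volume.restrict (Icc (s - 2⁻¹) (s + 2⁻¹))), ‖f t‖ ≤ G t := by
      have hae : ∀ᵐ t : ℝ ∂(volume.restrict (Icc (s - 2⁻¹) (s + 2⁻¹))), t ≠ s := by
        apply ae_restrict_of_ae
        rw [ae_iff]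
        have : {a : ℝ | ¬ a ≠ s} = {s} := by ext a; simp
        rw [this]
        exact measure_singleton s
      filter_upwards [hae, ae_restrict_mem measurableSet_Icc] with t htne htmem
      have htpos : 0 < |t - s| := abs_pos.mpr (sub_ne_zero.mpr htne)
      have hlo := hlow2 t htmem
      have hX0 : 0 < ‖c s - c t‖ := lt_of_lt_of_le (by positivity) hlo
      have hXB : ‖c s - c t‖ ≤ B := hBall s t
      have hup : Real.log ‖c s - c t‖ ≤ Real.log B := Real.log_le_log hX0 hXB
      have hlo2 : Real.log (m₀ * |t - s|) ≤ Real.log ‖c s - c t‖ :=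
        Real.log_le_log (by positivity) hlo
      rw [Real.log_mul hm₀pos.ne' htpos.ne', Real.log_abs] at hlo2
      have hBlog : 0 ≤ Real.log B := Real.log_nonneg hB1
      have habs1 : -|Real.log m₀| ≤ Real.log m₀ := neg_abs_le _
      have habs2 : -|Real.log (t - s)| ≤ Real.log (t - s) := neg_abs_le _
      rw [hf, Real.norm_eq_abs, abs_le]
      constructor
      · simp only [hGdef]
        have ha1 := abs_nonneg (Real.log m₀)
        have ha2 := abs_nonneg (Real.log (t - s))
        linarith
      · simp only [hGdef]
        have ha1 := abs_nonneg (Real.log m₀)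
        have ha2 := abs_nonneg (Real.log (t - s))
        linarith
    have hloc : IntegrableOn f (Icc (s - 2⁻¹) (s + 2⁻¹)) volume :=
      Integrable.mono' hGint hmeas hbound
    have hloc' : IntervalIntegrable f volume (s - 2⁻¹) (s - 2⁻¹ + 1) := by
      rw [intervalIntegrable_iff_integrableOn_Icc_of_le (by linarith)]
      rw [show s - 2⁻¹ + 1 = s + 2⁻¹ by ring]
      exact hloc
    have h01 := sl_periodic_transfer hfper hloc'
    rwa [intervalIntegrable_iff_integrableOn_Icc_of_le zero_le_one] at h01
  refine ⟨key, ?_⟩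
  intro γ hγ _ s
  obtain ⟨C, hC⟩ := (isCompact_Icc (a := (0:ℝ)) (b := 1)).exists_bound_of_continuousOn
    hγ.continuousOn
  have hC0 : 0 ≤ C := le_trans (norm_nonneg _) (hC 0 (by norm_num))
  have hker := key s
  apply Integrable.mono' (hker.norm.const_mul C)
  · exact (hker.aestronglyMeasurable.mul hγ.aestronglyMeasurable)
  · filter_upwards [ae_restrict_mem measurableSet_Icc] with t htmem
    rw [norm_mul]
    calc ‖Real.log ‖c s - c t‖‖ * ‖γ t‖ ≤ ‖Real.log ‖c s - c t‖‖ * C :=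
        mul_le_mul_of_nonneg_left (hC t htmem) (norm_nonneg _)
      _ = C * ‖Real.log ‖c s - c t‖‖ := mul_comm _ _
end
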